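/- Fix an integer K ≥ 2, an index k : Fin K, and ᾱ ∈ [0,1). Let μ_k = N(ᾱ e_k, (1−ᾱ²) I_K) and let A : ℝ^K → Fin K be the least-index argmax map. Then for every function g : Fin K → ℝ, ∫ g(A(w)) dμ_k(w) = 𝒯(ᾱ)·g(k) + ((1 − 𝒯(ᾱ))/K)·∑_{j : Fin K} g(j). Hence any expectation under the Uniform-state discrete marginal Cat(𝒯(ᾱ)·e_k + (1−𝒯(ᾱ))·𝟙/K) can be computed as an expectation over Gaussian latents composed with argmax. -/

import Mathlib

/-!
Almost surely the coordinates of `w` are pairwise distinct, and then `argmaxIdx w = j` exactly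
when `w j` dominates every coordinate. For the shifted index `k`, Fubini over the other coordinates
gives `P(A = k) = ∫ Φ(t/σ)^(K-1) dN(ᾱ, σ²)(t)` with `σ² = 1 - ᾱ²`, and the substitution `z = t/σ`
turns this into the integral in `𝒯(ᾱ)`, i.e. `P(A = k) = 𝒯(ᾱ) + (1 - 𝒯(ᾱ))/K`. Swapping two
indices other than `k` preserves the law of `w`, so those `K - 1` indices share the remaining mass
equally.
-/

open MeasureTheory ProbabilityTheory

/-- The standard normal density `φ(z) = exp(-z²/2)/√(2π)`. -/
noncomputable def stdGaussianPDF (z : ℝ) : ℝ :=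
  Real.exp (-z ^ 2 / 2) / Real.sqrt (2 * Real.pi)

/-- The standard normal cumulative distribution function `Φ(z) = ∫_{-∞}^z φ(u) du`. -/
noncomputable def stdGaussianCDF (z : ℝ) : ℝ :=
  ∫ u in Set.Iic z, stdGaussianPDF u

/-- The diffusion transformation operator
`𝒯(ᾱ) = (K/(K-1)) (∫_ℝ φ(z - ᾱ/√(1-ᾱ²)) Φ(z)^{K-1} dz - 1/K)`. -/
noncomputable def diffTransform (K : ℕ) (α : ℝ) : ℝ :=
  ((K : ℝ) / ((K : ℝ) - 1)) *
    ((∫ z : ℝ, stdGaussianPDF (z - α / Real.sqrt (1 - α ^ 2))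
        * stdGaussianCDF z ^ (K - 1)) - 1 / (K : ℝ))

/-- The least index attaining the maximum of `w : Fin K → ℝ`. -/
noncomputable def argmaxIdx {K : ℕ} [NeZero K] (w : Fin K → ℝ) : Fin K :=
  (Finset.univ.filter fun i => ∀ j, w j ≤ w i).min' (by
    obtain ⟨i, -, hi⟩ :=
      Finset.exists_max_image (Finset.univ : Finset (Fin K)) w Finset.univ_nonempty
    exact ⟨i, Finset.mem_filter.mpr ⟨Finset.mem_univ i, fun j => hi j (Finset.mem_univ j)⟩⟩)

open Set
open scoped NNReal

section Argmax

variable {K : ℕ} [NeZero K]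

theorem argmaxIdx_eq_iff (w : Fin K → ℝ) (j : Fin K) :
    argmaxIdx w = j ↔ (∀ i, w i ≤ w j) ∧ ∀ i < j, w i < w j := by
  unfold argmaxIdx
  set s := Finset.univ.filter fun i => ∀ l, w l ≤ w i
  have hmem : ∀ {hs : s.Nonempty} l, w l ≤ w (s.min' hs) := fun l =>
    (Finset.mem_filter.mp (Finset.min'_mem s _)).2 l
  constructor
  · rintro rfl
    refine ⟨hmem, fun i hi => lt_of_not_ge fun hle => hi.not_ge ?_⟩
    exact Finset.min'_le _ _ (Finset.mem_filter.mpr ⟨Finset.mem_univ i,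
      fun l => (hmem l).trans hle⟩)
  · rintro ⟨hmax, hleast⟩
    refine le_antisymm (Finset.min'_le _ _ (Finset.mem_filter.mpr ⟨Finset.mem_univ j, hmax⟩))
      (Finset.le_min' _ _ _ fun i hi => le_of_not_gt fun hij => ?_)
    exact (hleast i hij).not_ge ((Finset.mem_filter.mp hi).2 j)

theorem argmaxIdx_eq_iff_of_injective {w : Fin K → ℝ} (hw : Function.Injective w) (j : Fin K) :
    argmaxIdx w = j ↔ ∀ i, w i ≤ w j := by
  rw [argmaxIdx_eq_iff]
  exact ⟨And.left, fun h => ⟨h, fun i hi => (h i).lt_of_ne (hw.ne hi.ne)⟩⟩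

theorem measurable_argmaxIdx : Measurable (argmaxIdx : (Fin K → ℝ) → Fin K) := by
  refine measurable_to_countable' fun j => ?_
  have : argmaxIdx ⁻¹' {j} =
      (⋂ i, {w : Fin K → ℝ | w i ≤ w j}) ∩ ⋂ i, ⋂ (_ : i < j), {w | w i < w j} := by
    ext w
    simp [argmaxIdx_eq_iff]
  rw [this]
  exact .inter (.iInter fun i => measurableSet_le (measurable_pi_apply i) (measurable_pi_apply j))
    (.iInter fun i => .iInter fun _ =>
      measurableSet_lt (measurable_pi_apply i) (measurable_pi_apply j))

end Argmax

section Ties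

variable {α : Type*} [MeasurableSpace α] [MeasurableEq α]

theorem MeasureTheory.Measure.prod_diagonal_eq_zero {μ ν : Measure α} [SFinite μ] [SFinite ν]
    [NullSingletonClass μ] : μ.prod ν (Set.diagonal α) = 0 := by
  rw [Measure.prod_apply_symm measurableSet_diagonal]
  simp [Set.diagonal]

variable {ι : Type*} [Fintype ι] {μ : ι → Measure α} [∀ i, IsProbabilityMeasure (μ i)]
  [∀ i, NullSingletonClass (μ i)]

theorem MeasureTheory.Measure.pi_setOf_eq_eq_zero {i j : ι} (hij : i ≠ j) :
    Measure.pi μ {w | w i = w j} = 0 := by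
  have hindep : IndepFun (fun w : ι → α => w i) (fun w => w j) (Measure.pi μ) :=
    (iIndepFun_pi (X := fun _ => id) fun _ => aemeasurable_id).indepFun hij
  have hlaw : (Measure.pi μ).map (fun w => (w i, w j)) = (μ i).prod (μ j) := by
    rw [(indepFun_iff_map_prod_eq_prod_map_map (measurable_pi_apply i).aemeasurable
      (measurable_pi_apply j).aemeasurable).mp hindep,
      (measurePreserving_eval μ i).map_eq, (measurePreserving_eval μ j).map_eq]
  have hmeas : Measurable fun w : ι → α => (w i, w j) :=
    (measurable_pi_apply i).prodMk (measurable_pi_apply j)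
  have := Measure.map_apply (μ := Measure.pi μ) hmeas (measurableSet_diagonal (α := α))
  rw [hlaw, Measure.prod_diagonal_eq_zero] at this
  exact this.symm

theorem MeasureTheory.Measure.ae_injective_pi :
    ∀ᵐ w ∂Measure.pi μ, Function.Injective w := by
  have : ∀ i j, ∀ᵐ w ∂Measure.pi μ, w i = w j → i = j := by
    intro i j
    rcases eq_or_ne i j with rfl | hij
    · exact .of_forall fun _ _ => rfl
    · exact measure_mono_null (fun w hw => by simpa [hij] using hw) (pi_setOf_eq_eq_zero hij)
  simpa only [Function.Injective, ae_all_iff] using this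

end Ties

theorem MeasureTheory.Measure.pi_forall_le_eq_lintegral {n : ℕ} (μ : Fin (n + 1) → Measure ℝ)
    [∀ i, SigmaFinite (μ i)] (k : Fin (n + 1)) :
    Measure.pi μ {w | ∀ i, w i ≤ w k} = ∫⁻ t, ∏ j : Fin n, μ (k.succAbove j) (Iic t) ∂μ k := by
  set S := {p : ℝ × (Fin n → ℝ) | ∀ j, p.2 j ≤ p.1}
  have hS : MeasurableSet S := by
    simp only [S, Set.ofPred_forall]
    exact .iInter fun j => measurableSet_le ((measurable_pi_apply j).comp measurable_snd)
      measurable_fst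
  have hpre : {w : Fin (n + 1) → ℝ | ∀ i, w i ≤ w k} =
      MeasurableEquiv.piFinSuccAbove (fun _ => ℝ) k ⁻¹' S := by
    ext w
    simp [S, Fin.forall_iff_succAbove k, Fin.removeNth]
  rw [hpre, (measurePreserving_piFinSuccAbove μ k).measure_preimage hS.nullMeasurableSet,
    Measure.prod_apply hS]
  congr! with t
  rw [show Prod.mk t ⁻¹' S = Set.univ.pi fun _ => Iic t by ext; simp [S, Pi.le_def], Measure.pi_pi]

theorem MeasureTheory.Measure.real_pi_forall_le_eq_integral {n : ℕ}
    (μ : Fin (n + 1) → Measure ℝ) [∀ i, IsProbabilityMeasure (μ i)] (k : Fin (n + 1)) :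
    (Measure.pi μ).real {w | ∀ i, w i ≤ w k} =
      ∫ t, ∏ j : Fin n, cdf (μ (k.succAbove j)) t ∂μ k := by
  have hmono : ∀ j, Monotone fun t => μ (k.succAbove j) (Iic t) :=
    fun j _ _ hst => measure_mono (Iic_subset_Iic.mpr hst)
  rw [measureReal_def, pi_forall_le_eq_lintegral, ← integral_toReal
    (Finset.aemeasurable_fun_prod _ fun j _ => (hmono j).measurable.aemeasurable)
    (.of_forall fun t => ENNReal.prod_lt_top fun j _ => measure_lt_top _ _)]
  simp [ENNReal.toReal_prod, cdf_eq_real, measureReal_def]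

theorem MeasureTheory.Measure.pi_forall_le_perm {α ι : Type*} [MeasurableSpace α] [LE α]
    [Fintype ι] {μ : ι → Measure α} [∀ i, SigmaFinite (μ i)] (σ : Equiv.Perm ι)
    (hσ : ∀ i, μ (σ i) = μ i) (j : ι) :
    Measure.pi μ {w | ∀ i, w i ≤ w (σ j)} = Measure.pi μ {w | ∀ i, w i ≤ w j} := by
  have hpres := measurePreserving_piCongrLeft μ σ
  simp only [hσ] at hpres
  rw [← hpres.measure_preimage_equiv]
  congr! 1
  ext w
  simp only [Set.mem_preimage, Set.mem_ofPred_eq]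
  rw [← σ.forall_congr_right]
  simp only [MeasurableEquiv.piCongrLeft_apply_apply]

section Gaussian

theorem stdGaussianPDF_eq_gaussianPDFReal : stdGaussianPDF = gaussianPDFReal 0 1 := by
  funext x
  simp [stdGaussianPDF, gaussianPDFReal, div_eq_inv_mul, mul_comm]

theorem stdGaussianCDF_eq_cdf : stdGaussianCDF = cdf (gaussianReal 0 1) := by
  funext x
  rw [cdf_eq_real, measureReal_def, gaussianReal_apply_eq_integral 0 one_ne_zero,
    ENNReal.toReal_ofReal (setIntegral_nonneg measurableSet_Iic fun u _ =>
      gaussianPDFReal_nonneg 0 1 u), stdGaussianCDF, stdGaussianPDF_eq_gaussianPDFReal]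

variable {m : ℝ} {v : ℝ≥0}

theorem gaussianReal_map_div_sqrt (hv : v ≠ 0) :
    (gaussianReal m v).map (· / √v) = gaussianReal (m / √v) 1 := by
  rw [gaussianReal_map_div_const]
  congr
  ext
  simp [Real.sq_sqrt v.coe_nonneg, div_self (NNReal.coe_ne_zero.mpr hv)]

theorem cdf_gaussianReal_zero (hv : v ≠ 0) (t : ℝ) :
    cdf (gaussianReal 0 v) t = stdGaussianCDF (t / √v) := by
  have hσ : 0 < √(v : ℝ) := Real.sqrt_pos.mpr (by positivity)
  have hmap := gaussianReal_map_div_sqrt (m := 0) hv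
  rw [zero_div] at hmap
  rw [stdGaussianCDF_eq_cdf, cdf_eq_real, cdf_eq_real, ← hmap,
    map_measureReal_apply (measurable_div_const _) measurableSet_Iic]
  congr 1
  ext s
  simp [div_le_div_iff_of_pos_right hσ]

theorem integral_gaussianReal_comp_div_sqrt (hv : v ≠ 0) (f : ℝ → ℝ) :
    ∫ t, f (t / √v) ∂gaussianReal m v = ∫ z, stdGaussianPDF (z - m / √v) * f z := by
  have hσ : √(v : ℝ) ≠ 0 := (Real.sqrt_pos.mpr (by positivity)).ne'
  have hemb : MeasurableEmbedding (· / √(v : ℝ)) := by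
    simpa only [div_eq_mul_inv] using measurableEmbedding_mulRight₀ (inv_ne_zero hσ)
  rw [← hemb.integral_map, gaussianReal_map_div_sqrt hv,
    integral_gaussianReal_eq_integral_smul one_ne_zero]
  simp [stdGaussianPDF_eq_gaussianPDFReal, gaussianPDFReal_sub]

end Gaussian

theorem MeasureTheory.Measure.pi_argmaxIdx_preimage {K : ℕ} [NeZero K] {μ : Fin K → Measure ℝ}
    [∀ i, IsProbabilityMeasure (μ i)] [∀ i, NullSingletonClass (μ i)] (j : Fin K) :
    Measure.pi μ (argmaxIdx ⁻¹' {j}) = Measure.pi μ {w | ∀ i, w i ≤ w j} :=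
  measure_congr (ae_injective_pi.mono fun _ hw => propext (argmaxIdx_eq_iff_of_injective hw j))

theorem MeasureTheory.integral_comp_eq_sum_measureReal {Ω ι E : Type*} [MeasurableSpace Ω]
    [Fintype ι] [MeasurableSpace ι] [MeasurableSingletonClass ι] [NormedAddCommGroup E]
    [NormedSpace ℝ E] [CompleteSpace E] {μ : Measure Ω} [IsFiniteMeasure μ] {f : Ω → ι}
    (hf : Measurable f) (g : ι → E) : ∫ ω, g (f ω) ∂μ = ∑ j, μ.real (f ⁻¹' {j}) • g j := by
  rw [← integral_map hf.aemeasurable (.of_discrete), integral_fintype (.of_finite)]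
  simp [map_measureReal_apply hf (measurableSet_singleton _)]

section GaussianArgmax

variable {n : ℕ} {v : ℝ≥0} (m : ℝ)

theorem real_pi_gaussianReal_argmaxIdx_self (hv : v ≠ 0) (k : Fin (n + 1)) :
    (Measure.pi fun j => gaussianReal (if j = k then m else 0) v).real (argmaxIdx ⁻¹' {k}) =
      ∫ z, stdGaussianPDF (z - m / √v) * stdGaussianCDF z ^ n := by
  have := fun j : Fin (n + 1) => nullSingletonClass_gaussianReal (μ := if j = k then m else 0) hv
  rw [measureReal_def, Measure.pi_argmaxIdx_preimage, ← measureReal_def,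
    Measure.real_pi_forall_le_eq_integral]
  simp only [Fin.succAbove_ne, if_false, if_true, cdf_gaussianReal_zero hv, Finset.prod_const,
    Finset.card_univ, Fintype.card_fin]
  exact integral_gaussianReal_comp_div_sqrt hv (stdGaussianCDF · ^ n)

theorem real_pi_gaussianReal_argmaxIdx_of_ne (hv : v ≠ 0) {k i j : Fin (n + 1)} (hi : i ≠ k)
    (hj : j ≠ k) :
    (Measure.pi fun l => gaussianReal (if l = k then m else 0) v).real (argmaxIdx ⁻¹' {i}) =
      (Measure.pi fun l => gaussianReal (if l = k then m else 0) v).real (argmaxIdx ⁻¹' {j}) := by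
  have := fun l : Fin (n + 1) => nullSingletonClass_gaussianReal (μ := if l = k then m else 0) hv
  have hswap : ∀ l, Equiv.swap i j l = k ↔ l = k := fun l => by
    rw [Equiv.swap_apply_eq_iff, Equiv.swap_apply_of_ne_of_ne hi.symm hj.symm]
  simp only [measureReal_def, Measure.pi_argmaxIdx_preimage]
  rw [← Equiv.swap_apply_left i j, Measure.pi_forall_le_perm _ fun l => by simp only [hswap]]

end GaussianArgmax

section WeightsOffPivot

variable {ι : Type*} [Fintype ι] [DecidableEq ι] {p : ι → ℝ} {k : ι}

theorem Finset.sum_mul_eq_of_eq_off {q : ℝ} (hp : ∀ j ≠ k, p j = q) (g : ι → ℝ) :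
    ∑ j, p j * g j = p k * g k + q * (∑ j, g j - g k) := by
  rw [← Finset.add_sum_erase _ _ (Finset.mem_univ k),
    ← Finset.add_sum_erase _ g (Finset.mem_univ k), add_sub_cancel_left, Finset.mul_sum]
  congr 1
  exact Finset.sum_congr rfl fun j hj => by rw [hp j (Finset.ne_of_mem_erase hj)]

theorem eq_div_of_sum_eq_one_of_eq_off (hsum : ∑ j, p j = 1)
    (hp : ∀ i ≠ k, ∀ j ≠ k, p i = p j) {j : ι} (hj : j ≠ k) :
    p j = (1 - p k) / (Fintype.card ι - 1) := by
  have hcard : (Fintype.card ι : ℝ) - 1 = ((Finset.univ.erase k).card : ℝ) := by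
    rw [Finset.card_erase_of_mem (Finset.mem_univ k), Finset.card_univ,
      Nat.cast_sub (Fintype.card_pos_iff.mpr ⟨k⟩), Nat.cast_one]
  have hrest : ∑ i ∈ Finset.univ.erase k, p i = (Fintype.card ι - 1) * p j := by
    rw [Finset.sum_congr rfl fun i hi => hp i (Finset.ne_of_mem_erase hi) j hj,
      Finset.sum_const, nsmul_eq_mul, hcard]
  have hpos : (0 : ℝ) < Fintype.card ι - 1 := by
    rw [hcard, Nat.cast_pos, Finset.card_pos]
    exact ⟨j, Finset.mem_erase.mpr ⟨hj, Finset.mem_univ j⟩⟩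
  rw [← Finset.add_sum_erase _ _ (Finset.mem_univ k), hrest] at hsum
  rw [eq_div_iff hpos.ne']
  linarith

end WeightsOffPivot

/-- Expectations under the Uniform-state categorical marginal
`Cat(𝒯(ᾱ) e_k + (1-𝒯(ᾱ)) 𝟙/K)` can be computed as Gaussian expectations composed with
argmax: `∫ g(A(w)) dN(ᾱ e_k, (1-ᾱ²) I_K)(w) = 𝒯(ᾱ) g(k) + ((1-𝒯(ᾱ))/K) ∑_j g(j)`. -/
theorem gaussian_argmax_expectation (K : ℕ) (hK : 2 ≤ K) [NeZero K] (k : Fin K)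
    (α : ℝ) (hα0 : 0 ≤ α) (hα1 : α < 1) (g : Fin K → ℝ) :
    ∫ w, g (argmaxIdx w)
        ∂(Measure.pi fun j : Fin K =>
            gaussianReal (if j = k then α else 0) (Real.toNNReal (1 - α ^ 2)))
      = diffTransform K α * g k + ((1 - diffTransform K α) / (K : ℝ)) * ∑ j, g j := by
  obtain ⟨n, rfl⟩ : ∃ n, K = n + 1 := ⟨K - 1, by omega⟩
  have hα : 0 < 1 - α ^ 2 := by nlinarith
  have hv : Real.toNNReal (1 - α ^ 2) ≠ 0 := by simpa using hα
  have hsum : ∑ j, (Measure.pi fun j : Fin (n + 1) =>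
      gaussianReal (if j = k then α else 0) (Real.toNNReal (1 - α ^ 2))).real
        (argmaxIdx ⁻¹' {j}) = 1 := by
    rw [sum_measureReal_preimage_singleton _ fun j _ =>
      measurable_argmaxIdx (measurableSet_singleton j)]
    simp
  have hpk := real_pi_gaussianReal_argmaxIdx_self α hv k
  rw [Real.coe_toNNReal _ hα.le] at hpk
  rw [integral_comp_eq_sum_measureReal measurable_argmaxIdx]
  simp only [smul_eq_mul]
  rw [Finset.sum_mul_eq_of_eq_off (fun j hj => eq_div_of_sum_eq_one_of_eq_off hsum
      (fun i hi j hj => real_pi_gaussianReal_argmaxIdx_of_ne α hv hi hj) hj) g,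
    diffTransform, Nat.add_sub_cancel, ← hpk, Fintype.card_fin]
  have hn : (n : ℝ) ≠ 0 := by norm_cast; omega
  simp only [Nat.cast_add, Nat.cast_one, add_sub_cancel_right]
  field_simp
  ring
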